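/- arXiv:2605.22930 — 4 statements merged into one kernel-verified Lean document; each statement's English description precedes it below -/
import Mathlib

section
/- The cubic polynomial 1 - 6r + r^2 + 2r^3 has a unique root in the open interval (0, 1/2). -/
theorem unique_root_cubic :
    ∃! r : ℝ, r ∈ Set.Ioo (0 : ℝ) (1/2) ∧ 1 - 6*r + r^2 + 2*r^3 = 0 := by
  set f : ℝ → ℝ := fun r => 1 - 6*r + r^2 + 2*r^3 with hf
  have hc : Continuous f := by fun_prop
  have hd : ∀ r : ℝ, HasDerivAt f (-6 + 2*r + 6*r^2) r := by
    intro r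
    have h : HasDerivAt (fun r : ℝ => 1 - 6*r + r^2 + 2*r^3)
        (0 - 6*1 + 2*r^1 + 2*(3*r^2)) r := by
      apply HasDerivAt.add
      apply HasDerivAt.add
      apply HasDerivAt.sub
      · exact hasDerivAt_const r 1
      · exact (hasDerivAt_id r).const_mul 6
      · exact hasDerivAt_pow 2 r
      · exact (hasDerivAt_pow 3 r).const_mul 2
    convert h using 1
    ring
  have hanti : StrictAntiOn f (Set.Icc 0 (1/2)) := by
    apply strictAntiOn_of_deriv_neg (convex_Icc _ _) hc.continuousOn
    intro x hx
    rw [interior_Icc] at hx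
    rw [(hd x).deriv]
    nlinarith [hx.1, hx.2]
  have hex : (0 : ℝ) ∈ f '' Set.Ioo 0 (1/2) := by
    apply intermediate_value_Ioo' (by norm_num) hc.continuousOn
    constructor <;> · simp only [hf]; norm_num
  obtain ⟨r, hr, hr0⟩ := hex
  refine ⟨r, ⟨hr, hr0⟩, ?_⟩
  rintro s ⟨hs, hs0⟩
  have h1 : s ∈ Set.Icc (0:ℝ) (1/2) := Set.mem_Icc_of_Ioo hs
  have h2 : r ∈ Set.Icc (0:ℝ) (1/2) := Set.mem_Icc_of_Ioo hr
  exact hanti.injOn h1 h2 (by show f s = f r; rw [hf]; simp only []; rw [hs0]; exact hr0.symm)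
end

section
/- For every integer N ≥ 2, the function S(r) = -1 + 2r + r^2 + 2r^N - 2r^{1+N} is strictly increasing on (0, 1/2), satisfies S(0) = -1 < 0 and S(1/2) = 1/4 + 1/2^N > 0, and hence has a unique root in (0, 1/2). -/
/-!
Writing `S(r) = (r + 1)^2 - 2 + 2 r^N (1 - r)`, the first part is strictly increasing for
`r ≥ 0`, and `r^N (1 - r)` increases up to its maximum at `N / (N + 1) ≥ 1/2`. So `S` is strictly
increasing on `(0, 1/2)`, and as `S(0) < 0 < S(1/2)` the intermediate value theorem gives exactly
one root.
-/

open Set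

theorem monotoneOn_pow_mul_one_sub (n : ℕ) :
    MonotoneOn (fun r : ℝ => r ^ n * (1 - r)) (Icc 0 (n / (n + 1))) := by
  refine monotoneOn_of_deriv_nonneg (convex_Icc _ _) (by fun_prop) (by fun_prop) ?_
  intro x hx
  rw [interior_Icc] at hx
  obtain ⟨hx0, hxn⟩ := hx
  have hderiv : HasDerivAt (fun r : ℝ => r ^ n * (1 - r))
      (n * x ^ (n - 1) * (1 - x) + x ^ n * -1) x :=
    (hasDerivAt_pow n x).mul ((hasDerivAt_id x).const_sub 1)
  rw [hderiv.deriv]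
  cases n with
  | zero => norm_num at hxn; linarith
  | succ m =>
    have hxm : x * (m + 2) < m + 1 := by
      rw [lt_div_iff₀ (by positivity)] at hxn
      push_cast at hxn
      linarith
    have hfactor : ((m + 1 : ℕ) : ℝ) * x ^ (m + 1 - 1) * (1 - x) + x ^ (m + 1) * -1 =
        x ^ m * (m + 1 - x * (m + 2)) := by
      simp only [Nat.add_sub_cancel]
      push_cast
      ring
    rw [hfactor]
    exact mul_nonneg (pow_nonneg hx0.le _) (by linarith)

theorem existsUnique_mem_Ioo_eq_zero_of_strictMonoOn {f : ℝ → ℝ} {a b : ℝ} (hab : a ≤ b)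
    (hcont : ContinuousOn f (Icc a b)) (hmono : StrictMonoOn f (Ioo a b))
    (ha : f a < 0) (hb : 0 < f b) :
    ∃! r, r ∈ Ioo a b ∧ f r = 0 := by
  obtain ⟨r, hr, hr0⟩ := intermediate_value_Ioo hab hcont ⟨ha, hb⟩
  exact ⟨r, ⟨hr, hr0⟩, fun s ⟨hs, hs0⟩ => hmono.injOn hs hr (hs0.trans hr0.symm)⟩

theorem strictMonoOn_bohrRogosinski (N : ℕ) (hN : 1 ≤ N) :
    StrictMonoOn (fun r : ℝ => -1 + 2*r + r^2 + 2*r^N - 2*r^(1+N)) (Ioo 0 (1/2)) := by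
  have hhalf : (1 : ℝ) / 2 ≤ N / (N + 1) := by
    rw [div_le_div_iff₀ (by norm_num) (by positivity)]
    linarith [show (1 : ℝ) ≤ N by exact_mod_cast hN]
  have hsub : Ioo (0 : ℝ) (1/2) ⊆ Icc 0 (N / (N + 1)) := fun r hr => ⟨hr.1.le, by linarith [hr.2]⟩
  intro r hr s hs hrs
  have hsq : (r + 1) ^ 2 < (s + 1) ^ 2 := by nlinarith [hr.1, hs.1]
  have hpow := monotoneOn_pow_mul_one_sub N (hsub hr) (hsub hs) hrs.le
  simp only at hpow ⊢
  linear_combination hsq + 2 * hpow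

theorem S_strictMono_and_unique_root (N : ℕ) (hN : 2 ≤ N) :
    StrictMonoOn (fun r : ℝ => -1 + 2*r + r^2 + 2*r^N - 2*r^(1+N)) (Set.Ioo (0 : ℝ) (1/2)) ∧
    (-1 + 2*(0:ℝ) + (0:ℝ)^2 + 2*(0:ℝ)^N - 2*(0:ℝ)^(1+N) = -1) ∧ (-1 : ℝ) < 0 ∧
    (-1 + 2*((1:ℝ)/2) + ((1:ℝ)/2)^2 + 2*((1:ℝ)/2)^N - 2*((1:ℝ)/2)^(1+N) = 1/4 + 1/2^N) ∧
    (0 : ℝ) < 1/4 + 1/2^N ∧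
    (∃! r : ℝ, r ∈ Set.Ioo (0 : ℝ) (1/2) ∧ -1 + 2*r + r^2 + 2*r^N - 2*r^(1+N) = 0) := by
  set S : ℝ → ℝ := fun r => -1 + 2*r + r^2 + 2*r^N - 2*r^(1+N)
  have hmono : StrictMonoOn S (Ioo 0 (1/2)) := strictMonoOn_bohrRogosinski N (by omega)
  have hS0 : S 0 = -1 := by simp [S, zero_pow (show N ≠ 0 by omega)]
  have hShalf : S (1/2) = 1/4 + 1/2^N := by simp only [S, pow_add, one_div, inv_pow]; ring
  have hpos : (0 : ℝ) < 1/4 + 1/2^N := by positivity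
  refine ⟨hmono, hS0, by norm_num, hShalf, hpos, ?_⟩
  exact existsUnique_mem_Ioo_eq_zero_of_strictMonoOn (by norm_num) (by fun_prop) hmono
    (hS0.trans_lt (by norm_num)) (hpos.trans_eq hShalf.symm)
end

section
/- For every integer N ≥ 2, the function R(r) = 2r/(1-r) + log(1-r) + ∑_{n=N}^∞ (2 - 1/n) r^n - (1 - log 2) is strictly increasing on (0, 1), satisfies R(0) = log 2 - 1 < 0 and R(1/2) > 0, and has a unique root in (0, 1/2). -/
/-!
Since `2r/(1-r) = ∑_{n ≥ 1} 2 rⁿ` and `log (1-r) = -∑_{n ≥ 1} rⁿ/n`, the function is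
`∑_{n ≥ 1} (2 - 1/n) rⁿ + ∑_{n ≥ N} (2 - 1/n) rⁿ - (1 - log 2)`, a power series with
positive coefficients minus a constant; hence it is strictly increasing on `[0, 1)`. Its value
at `1/2` is `1` plus a nonnegative tail, and the root comes from the intermediate value
theorem.
-/

open Real Set

lemma two_sub_one_div_mem_Icc {x : ℝ} (hx : 1 ≤ x) : 2 - 1 / x ∈ Icc (1 : ℝ) 2 := by
  have h0 : 0 < 1 / x := by positivity
  have h1 : 1 / x ≤ 1 := by rw [div_le_one (by linarith)]; exact hx
  constructor <;> linarith

section PowerSeries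

variable {a : ℕ → ℝ} {m : ℕ → ℕ} {x y : ℝ}

lemma summable_mul_pow_add_of_abs_le {C : ℝ} (ha : ∀ n, |a n| ≤ C) (k : ℕ) (hy : |y| < 1) :
    Summable fun n => a n * y ^ (n + k) := by
  refine .of_norm_bounded
    ((summable_geometric_of_lt_one (abs_nonneg y) hy).mul_left (C * |y| ^ k)) fun n => ?_
  calc ‖a n * y ^ (n + k)‖ = |a n| * |y| ^ k * |y| ^ n := by
        rw [Real.norm_eq_abs, abs_mul, abs_pow, pow_add]; ring
    _ ≤ C * |y| ^ k * |y| ^ n := by gcongr; exact ha n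

lemma continuousOn_tsum_mul_pow_add {C s : ℝ} (ha : ∀ n, |a n| ≤ C) (k : ℕ) (hs : |s| < 1) :
    ContinuousOn (fun r => ∑' n, a n * r ^ (n + k)) (Icc (-s) s) := by
  have hC : 0 ≤ C := (abs_nonneg _).trans (ha 0)
  have hu : Summable fun n => C * |s| ^ (n + k) :=
    summable_mul_pow_add_of_abs_le (fun _ => (abs_of_nonneg hC).le) k (by rwa [abs_abs])
  refine continuousOn_tsum (fun n => by fun_prop) hu fun n r hr => ?_
  have hrs : |r| ≤ |s| := (abs_le.mpr hr).trans (le_abs_self s)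
  rw [Real.norm_eq_abs, abs_mul, abs_pow]
  exact mul_le_mul (ha n) (pow_le_pow_left₀ (abs_nonneg r) hrs _) (by positivity) hC

lemma tsum_mul_pow_le_tsum_mul_pow (ha : ∀ n, 0 ≤ a n) (hx : 0 ≤ x) (hxy : x ≤ y)
    (hy : Summable fun n => a n * y ^ m n) :
    ∑' n, a n * x ^ m n ≤ ∑' n, a n * y ^ m n := by
  have hle : ∀ n, a n * x ^ m n ≤ a n * y ^ m n := fun n => by gcongr; exact ha n
  have hx_summable : Summable fun n => a n * x ^ m n :=
    .of_nonneg_of_le (fun n => mul_nonneg (ha n) (by positivity)) hle hy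
  exact Summable.tsum_le_tsum hle hx_summable hy

lemma tsum_mul_pow_lt_tsum_mul_pow (ha : ∀ n, 0 ≤ a n) {k : ℕ} (hak : 0 < a k)
    (hmk : m k ≠ 0) (hx : 0 ≤ x) (hxy : x < y) (hy : Summable fun n => a n * y ^ m n) :
    ∑' n, a n * x ^ m n < ∑' n, a n * y ^ m n :=
  Summable.tsum_lt_tsum_of_nonneg (i := k) (fun n => mul_nonneg (ha n) (by positivity))
    (fun n => by gcongr; exact ha n) (by gcongr) hy

end PowerSeries

lemma hasSum_two_sub_one_div_mul_pow {r : ℝ} (hr : |r| < 1) :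
    HasSum (fun n : ℕ => (2 - 1 / ((n : ℝ) + 1)) * r ^ (n + 1))
      (2 * r / (1 - r) + log (1 - r)) := by
  have hgeom : HasSum (fun n : ℕ => 2 * r ^ (n + 1)) (2 * r / (1 - r)) := by
    have h := (hasSum_geometric_of_abs_lt_one hr).mul_left (2 * r)
    rw [← div_eq_mul_inv] at h
    exact h.congr_fun fun n => by ring
  have h := hgeom.sub (hasSum_pow_div_log_of_abs_lt_one hr)
  rw [sub_neg_eq_add] at h
  exact h.congr_fun fun n => by ring

lemma two_sub_one_div_cast_add_mem_Icc {N : ℕ} (hN : 1 ≤ N) (n : ℕ) :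
    2 - 1 / ((n : ℝ) + N) ∈ Icc (1 : ℝ) 2 :=
  two_sub_one_div_mem_Icc (by
    have : (1 : ℝ) ≤ N := by exact_mod_cast hN
    linarith [n.cast_nonneg (α := ℝ)])

lemma abs_two_sub_one_div_cast_add_le {N : ℕ} (hN : 1 ≤ N) (n : ℕ) :
    |2 - 1 / ((n : ℝ) + N)| ≤ 2 := by
  have h := two_sub_one_div_cast_add_mem_Icc hN n
  exact abs_le.mpr ⟨by linarith [h.1], h.2⟩

lemma strictMonoOn_two_mul_div_add_log :
    StrictMonoOn (fun r : ℝ => 2 * r / (1 - r) + log (1 - r)) (Ico 0 1) := by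
  intro x hx y hy hxy
  have habs : ∀ {r : ℝ}, r ∈ Ico (0 : ℝ) 1 → |r| < 1 := fun hr =>
    abs_lt.mpr ⟨by linarith [hr.1], hr.2⟩
  simp only
  rw [← (hasSum_two_sub_one_div_mul_pow (habs hx)).tsum_eq,
    ← (hasSum_two_sub_one_div_mul_pow (habs hy)).tsum_eq]
  refine tsum_mul_pow_lt_tsum_mul_pow (k := 0) (fun n => ?_) (by norm_num) (by norm_num)
    hx.1 hxy (hasSum_two_sub_one_div_mul_pow (habs hy)).summable
  exact (two_sub_one_div_mem_Icc (by linarith [n.cast_nonneg (α := ℝ)])).1.trans' zero_le_one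

lemma monotoneOn_tsum_two_sub_one_div_cast_add_mul_pow {N : ℕ} (hN : 1 ≤ N) :
    MonotoneOn (fun r : ℝ => ∑' n : ℕ, (2 - 1 / ((n : ℝ) + N)) * r ^ (n + N)) (Ico 0 1) :=
  fun _ hx y hy hxy => tsum_mul_pow_le_tsum_mul_pow
    (fun n => zero_le_one.trans (two_sub_one_div_cast_add_mem_Icc hN n).1) hx.1 hxy
    (summable_mul_pow_add_of_abs_le (abs_two_sub_one_div_cast_add_le hN) N
      (abs_lt.mpr ⟨by linarith [hy.1], hy.2⟩))

lemma tsum_two_sub_one_div_cast_add_mul_pow_nonneg {N : ℕ} (hN : 1 ≤ N) {r : ℝ}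
    (hr : 0 ≤ r) :
    0 ≤ ∑' n : ℕ, (2 - 1 / ((n : ℝ) + N)) * r ^ (n + N) :=
  tsum_nonneg fun n => mul_nonneg
    (zero_le_one.trans (two_sub_one_div_cast_add_mem_Icc hN n).1) (by positivity)

lemma continuousOn_two_mul_div_add_log :
    ContinuousOn (fun r : ℝ => 2 * r / (1 - r) + log (1 - r)) (Iio 1) :=
  .add (.div (by fun_prop) (by fun_prop) fun _ hx => (sub_pos.mpr hx).ne')
    (.log (by fun_prop) fun _ hx => (sub_pos.mpr hx).ne')

theorem R_strictMono_signs_unique_root (N : ℕ) (hN : 2 ≤ N) :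
    StrictMonoOn
      (fun r : ℝ => 2*r/(1-r) + Real.log (1-r)
        + (∑' n : ℕ, (2 - 1/((n:ℝ)+N)) * r^(n+N)) - (1 - Real.log 2)) (Set.Ioo (0 : ℝ) 1) ∧
    (2*(0:ℝ)/(1-0) + Real.log (1-(0:ℝ))
        + (∑' n : ℕ, (2 - 1/((n:ℝ)+N)) * (0:ℝ)^(n+N)) - (1 - Real.log 2) = Real.log 2 - 1) ∧
    Real.log 2 - 1 < 0 ∧
    0 < 2*((1:ℝ)/2)/(1-1/2) + Real.log (1-(1:ℝ)/2)
        + (∑' n : ℕ, (2 - 1/((n:ℝ)+N)) * ((1:ℝ)/2)^(n+N)) - (1 - Real.log 2) ∧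
    (∃! r : ℝ, r ∈ Set.Ioo (0 : ℝ) (1/2) ∧
      2*r/(1-r) + Real.log (1-r)
        + (∑' n : ℕ, (2 - 1/((n:ℝ)+N)) * r^(n+N)) - (1 - Real.log 2) = 0) := by
  set F : ℝ → ℝ := fun r => 2*r/(1-r) + Real.log (1-r)
    + (∑' n : ℕ, (2 - 1/((n:ℝ)+N)) * r^(n+N)) - (1 - Real.log 2)
  have hN1 : 1 ≤ N := by omega
  have hlog : log 2 < 1 := by linarith [log_two_lt_d9]
  have hmono : StrictMonoOn F (Ioo 0 1) := fun x hx y hy hxy => by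
    have h1 := strictMonoOn_two_mul_div_add_log ⟨hx.1.le, hx.2⟩ ⟨hy.1.le, hy.2⟩ hxy
    have h2 := monotoneOn_tsum_two_sub_one_div_cast_add_mul_pow hN1 ⟨hx.1.le, hx.2⟩
      ⟨hy.1.le, hy.2⟩ hxy.le
    simp only [F] at h1 h2 ⊢
    linarith
  have hF0 : F 0 = log 2 - 1 := by simp [F, show N ≠ 0 by omega]
  have hFhalf : 0 < F (1 / 2) := by
    have htail := tsum_two_sub_one_div_cast_add_mul_pow_nonneg hN1 (r := 1 / 2) (by norm_num)
    have hlog_half : log (1 - 1 / 2) = -log 2 := by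
      rw [show (1 : ℝ) - 1 / 2 = 2⁻¹ by norm_num, log_inv]
    have hfrac : 2 * (1 / 2 : ℝ) / (1 - 1 / 2) = 2 := by norm_num
    simp only [F, hlog_half, hfrac]
    linarith
  have hcont : ContinuousOn F (Icc 0 (1 / 2)) := by
    have hhead := continuousOn_two_mul_div_add_log.mono fun x (hx : x ∈ Icc (0 : ℝ) (1 / 2)) =>
      show x < 1 by linarith [hx.2]
    have htail := (continuousOn_tsum_mul_pow_add (abs_two_sub_one_div_cast_add_le hN1) N
      (s := 1 / 2) (by norm_num)).mono (Icc_subset_Icc (by norm_num : -(1 / 2 : ℝ) ≤ 0) le_rfl)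
    exact (hhead.add htail).sub continuousOn_const
  refine ⟨hmono, hF0, by linarith, hFhalf, ?_⟩
  obtain ⟨r, hr, hr0⟩ := intermediate_value_Ioo (by norm_num) hcont ⟨by linarith, hFhalf⟩
  have hsub : Ioo (0 : ℝ) (1 / 2) ⊆ Ioo 0 1 := Ioo_subset_Ioo_right (by norm_num)
  exact ⟨r, ⟨hr, hr0⟩, fun y hy => hmono.injOn (hsub hy.1) (hsub hr) (hy.2.trans hr0.symm)⟩
end

section
/- The function P(r) = 2(2 - r²)r/(3(1-r)²) - (1/3)∫_0^r (log(1-t)/t) dt - (1/3) log(1-r) + ∑_{n=2}^∞ r^n/(3n²) - (1/3 + π²/36) satisfies P(0) = -(1/3 + π²/36) < 0 and P(1/2) = (66 + π² - 12(log 2)² + log 4096)/36 > 0, and hence has a root in (0, 1/2). -/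
/-!
The integral in `P r` is `-dilog r` and the series is `(dilog r - r) / 3`, so `P` is continuous
on `[0, 1/2]`, and its value at `1/2` is explicit once `dilog (1/2) = π²/12 - (log 2)²/2` is known.
That value is Euler's reflection formula `dilog x + dilog (1 - x) = π²/6 - log x log (1 - x)` at
`x = 1/2`: substituting `t ↦ 1 - t` turns `∫_{1-x}^1 log (1 - t) / t` into
`∫_0^x log t / (1 - t)`, and both integrals are computed by expanding the integrand in a power
series and integrating termwise. The root then comes from the intermediate value theorem.
-/

open Real MeasureTheory Set intervalIntegral

lemma intervalIntegral_tsum_of_summable_integral_norm {E : Type*} [NormedAddCommGroup E]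
    [NormedSpace ℝ E] [CompleteSpace E] {F : ℕ → ℝ → E} {a b : ℝ} (hab : a ≤ b)
    (hF : ∀ n, IntervalIntegrable (F n) volume a b)
    (hs : Summable fun n => ∫ t in a..b, ‖F n t‖) :
    ∫ t in a..b, ∑' n, F n t = ∑' n, ∫ t in a..b, F n t := by
  simp only [integral_of_le hab] at hs ⊢
  exact (integral_tsum_of_summable_integral_norm (fun n => (hF n).1) hs).symm

noncomputable def dilog (x : ℝ) : ℝ := ∑' n : ℕ, x ^ (n + 1) / ((n : ℝ) + 1) ^ 2

lemma norm_dilog_term_le {x : ℝ} (hx : |x| ≤ 1) (n : ℕ) :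
    ‖x ^ (n + 1) / ((n : ℝ) + 1) ^ 2‖ ≤ 1 / ((n : ℝ) + 1) ^ 2 := by
  rw [norm_div, norm_pow, Real.norm_eq_abs, norm_of_nonneg (by positivity)]
  gcongr
  exact pow_le_one₀ (abs_nonneg x) hx

lemma hasSum_one_div_nat_add_one_sq :
    HasSum (fun n : ℕ => 1 / ((n : ℝ) + 1) ^ 2) (π ^ 2 / 6) := by
  simpa using (hasSum_nat_add_iff' 1).mpr hasSum_zeta_two

lemma summable_dilog {x : ℝ} (hx : |x| ≤ 1) :
    Summable fun n : ℕ => x ^ (n + 1) / ((n : ℝ) + 1) ^ 2 :=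
  hasSum_one_div_nat_add_one_sq.summable.of_norm_bounded (norm_dilog_term_le hx)

@[simp]
lemma dilog_zero : dilog 0 = 0 := by
  simp [dilog]

lemma dilog_one : dilog 1 = π ^ 2 / 6 := by
  simpa [dilog] using hasSum_one_div_nat_add_one_sq.tsum_eq

lemma continuousOn_dilog : ContinuousOn dilog (Icc (-1) 1) :=
  continuousOn_tsum (fun n => by fun_prop) hasSum_one_div_nat_add_one_sq.summable
    (fun n x hx => norm_dilog_term_le (abs_le.mpr hx) n)

lemma tsum_pow_add_two_div_eq_dilog {x : ℝ} (hx : |x| ≤ 1) :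
    ∑' n : ℕ, x ^ (n + 2) / (3 * ((n : ℝ) + 2) ^ 2) = (dilog x - x) / 3 := by
  have h := ((hasSum_nat_add_iff' 1).mpr (summable_dilog hx).hasSum).div_const 3
  refine (h.congr_fun fun n => ?_).tsum_eq.trans ?_
  · push_cast; field_simp; ring
  · simp [dilog]

lemma hasSum_log_one_sub_div {t : ℝ} (ht : |t| < 1) (ht0 : t ≠ 0) :
    HasSum (fun n : ℕ => -(t ^ n / ((n : ℝ) + 1))) (log (1 - t) / t) := by
  rw [show log (1 - t) / t = -(t⁻¹ * -log (1 - t)) by ring]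
  refine ((hasSum_pow_div_log_of_abs_lt_one ht).mul_left t⁻¹).neg.congr_fun fun n => ?_
  rw [pow_succ']
  field_simp

theorem integral_log_one_sub_div {a b : ℝ} (ha : 0 ≤ a) (hab : a ≤ b) (hb : b ≤ 1) :
    ∫ t in a..b, log (1 - t) / t = dilog a - dilog b := by
  have hterm (n : ℕ) : ∫ t in a..b, -(t ^ n / ((n : ℝ) + 1))
      = -((b ^ (n + 1) - a ^ (n + 1)) / ((n : ℝ) + 1) ^ 2) := by
    rw [intervalIntegral.integral_neg, intervalIntegral.integral_div, integral_pow]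
    field_simp
  have hnorm (n : ℕ) : ∫ t in a..b, ‖-(t ^ n / ((n : ℝ) + 1))‖
      = (b ^ (n + 1) - a ^ (n + 1)) / ((n : ℝ) + 1) ^ 2 := by
    rw [← intervalIntegral.integral_congr (f := fun t => t ^ n / ((n : ℝ) + 1)),
      intervalIntegral.integral_div, integral_pow]
    · field_simp
    intro t ht
    rw [uIcc_of_le hab] at ht
    have : 0 ≤ t ^ n / ((n : ℝ) + 1) := by have := ha.trans ht.1; positivity
    simp only [Real.norm_eq_abs, abs_neg, abs_of_nonneg this]
  have hA := summable_dilog (x := a) (abs_le.mpr ⟨by linarith, by linarith⟩)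
  have hB := summable_dilog (x := b) (abs_le.mpr ⟨by linarith, hb⟩)
  have hsum : Summable fun n : ℕ => (b ^ (n + 1) - a ^ (n + 1)) / ((n : ℝ) + 1) ^ 2 :=
    (hB.sub hA).congr fun n => by ring
  have hseries : ∀ᵐ t, t ∈ uIoc a b →
      log (1 - t) / t = ∑' n : ℕ, -(t ^ n / ((n : ℝ) + 1)) := by
    filter_upwards [volume.ae_ne 1] with t ht1 ht
    rw [uIoc_of_le hab] at ht
    have ht0 : 0 < t := ha.trans_lt ht.1
    exact (hasSum_log_one_sub_div (abs_lt.mpr ⟨by linarith, lt_of_le_of_ne (ht.2.trans hb) ht1⟩)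
      ht0.ne').tsum_eq.symm
  rw [intervalIntegral.integral_congr_ae hseries,
    intervalIntegral_tsum_of_summable_integral_norm hab
      (fun n => (by fun_prop : Continuous _).intervalIntegrable _ _)
      (by simpa only [hnorm] using hsum)]
  simp only [hterm, dilog]
  rw [tsum_neg, ← hA.tsum_sub hB, ← tsum_neg]
  congr with n
  ring

lemma hasDerivAt_pow_mul_log_primitive (n : ℕ) {x : ℝ} (hx : x ≠ 0) :
    HasDerivAt (fun t => t ^ n * (t * log t) / ((n : ℝ) + 1) - t ^ (n + 1) / ((n : ℝ) + 1) ^ 2)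
      (x ^ n * log x) x := by
  refine ((((hasDerivAt_pow n x).mul (hasDerivAt_mul_log hx)).div_const ((n : ℝ) + 1)).sub
    ((hasDerivAt_pow (n + 1) x).div_const (((n : ℝ) + 1) ^ 2))).congr_deriv ?_
  rcases n with _ | n
  · simp
  · simp only [Nat.add_sub_cancel, Nat.cast_add, Nat.cast_one, pow_succ]
    field_simp
    ring

lemma integral_pow_mul_log {x : ℝ} (hx : 0 ≤ x) (n : ℕ) :
    ∫ t in (0 : ℝ)..x, t ^ n * log t
      = x ^ (n + 1) * log x / ((n : ℝ) + 1) - x ^ (n + 1) / ((n : ℝ) + 1) ^ 2 := by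
  rw [integral_eq_sub_of_hasDerivAt_of_le hx (by fun_prop)
    (fun t ht => hasDerivAt_pow_mul_log_primitive n ht.1.ne')
    (intervalIntegrable_log'.continuousOn_mul (by fun_prop))]
  simp only [zero_pow (Nat.succ_ne_zero n), zero_mul, mul_zero, zero_div, sub_zero]
  ring

theorem integral_log_div_one_sub {x : ℝ} (hx0 : 0 < x) (hx1 : x < 1) :
    ∫ t in (0 : ℝ)..x, log t / (1 - t) = -log x * log (1 - x) - dilog x := by
  have hlog : HasSum (fun n : ℕ => x ^ (n + 1) / ((n : ℝ) + 1)) (-log (1 - x)) :=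
    hasSum_pow_div_log_of_abs_lt_one (abs_lt.mpr ⟨by linarith, hx1⟩)
  have hdilog := (summable_dilog (abs_le.mpr ⟨by linarith, hx1.le⟩)).hasSum
  have hnorm (n : ℕ) : ∫ t in (0 : ℝ)..x, ‖t ^ n * log t‖
      = -log x * (x ^ (n + 1) / ((n : ℝ) + 1)) + x ^ (n + 1) / ((n : ℝ) + 1) ^ 2 := by
    rw [← intervalIntegral.integral_congr (f := fun t => -(t ^ n * log t)),
      intervalIntegral.integral_neg, integral_pow_mul_log hx0.le]
    · ring
    intro t ht
    rw [uIcc_of_le hx0.le] at ht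
    have : t ^ n * log t ≤ 0 :=
      mul_nonpos_of_nonneg_of_nonpos (pow_nonneg ht.1 n) (log_nonpos ht.1 (by linarith [ht.2]))
    simp only [Real.norm_eq_abs, abs_of_nonpos this]
  have hseries : EqOn (fun t => log t / (1 - t)) (fun t => ∑' n : ℕ, t ^ n * log t)
      (uIcc 0 x) := by
    intro t ht
    rw [uIcc_of_le hx0.le] at ht
    show log t / (1 - t) = ∑' n : ℕ, t ^ n * log t
    rw [tsum_mul_right, tsum_geometric_of_lt_one ht.1 (by linarith [ht.2]), div_eq_inv_mul]
  rw [intervalIntegral.integral_congr hseries,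
    intervalIntegral_tsum_of_summable_integral_norm hx0.le
      (fun n => intervalIntegrable_log'.continuousOn_mul (by fun_prop))
      (by simpa only [hnorm] using ((hlog.mul_left _).add hdilog).summable)]
  simp only [integral_pow_mul_log hx0.le]
  refine (((hlog.mul_left (log x)).sub hdilog).congr_fun fun n => ?_).tsum_eq.trans ?_
  · ring
  · rw [dilog]; ring

theorem dilog_add_dilog_one_sub {x : ℝ} (hx0 : 0 < x) (hx1 : x < 1) :
    dilog x + dilog (1 - x) = π ^ 2 / 6 - log x * log (1 - x) := by
  have hreflect : ∫ t in (1 - x)..1, log (1 - t) / t = ∫ t in (0 : ℝ)..x, log t / (1 - t) := by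
    simpa using (intervalIntegral.integral_comp_sub_left (fun t => log (1 - t) / t) 1
      (a := 0) (b := x)).symm
  rw [integral_log_one_sub_div (by linarith) (by linarith) le_rfl,
    integral_log_div_one_sub hx0 hx1, dilog_one] at hreflect
  linarith

lemma dilog_half : dilog (1 / 2) = π ^ 2 / 12 - log 2 ^ 2 / 2 := by
  have h := dilog_add_dilog_one_sub (x := 1 / 2) (by norm_num) (by norm_num)
  rw [show (1 : ℝ) - 1 / 2 = 1 / 2 by norm_num, one_div, log_inv] at h
  linarith

noncomputable def bohrP (r : ℝ) : ℝ :=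
  2*(2 - r^2)*r/(3*(1-r)^2)
    - (1/3) * (∫ t in (0:ℝ)..r, Real.log (1-t) / t)
    - (1/3) * Real.log (1-r)
    + (∑' n : ℕ, r^(n+2)/(3*((n:ℝ)+2)^2)) - (1/3 + Real.pi^2/36)

lemma bohrP_eq {r : ℝ} (hr0 : 0 ≤ r) (hr1 : r ≤ 1) :
    bohrP r = 2 * (2 - r ^ 2) * r / (3 * (1 - r) ^ 2) + (2 * dilog r - r) / 3
      - log (1 - r) / 3 - (1 / 3 + π ^ 2 / 36) := by
  rw [bohrP, integral_log_one_sub_div le_rfl hr0 hr1,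
    tsum_pow_add_two_div_eq_dilog (abs_le.mpr ⟨by linarith, hr1⟩), dilog_zero]
  ring

lemma bohrP_zero : bohrP 0 = -(1 / 3 + π ^ 2 / 36) := by
  simp [bohrP]

lemma bohrP_half :
    bohrP (1 / 2) = (66 + π ^ 2 - 12 * log 2 ^ 2 + log 4096) / 36 := by
  have hlog4096 : log 4096 = 12 * log 2 := by
    rw [show (4096 : ℝ) = 2 ^ 12 by norm_num, log_pow]; norm_num
  rw [bohrP_eq (by norm_num) (by norm_num), dilog_half, hlog4096,
    show (1 : ℝ) - 1 / 2 = 2⁻¹ by norm_num, log_inv]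
  ring

lemma continuousOn_bohrP : ContinuousOn bohrP (Icc 0 (1 / 2)) := by
  have hdilog : ContinuousOn dilog (Icc 0 (1 / 2)) :=
    continuousOn_dilog.mono (Icc_subset_Icc (by norm_num) (by norm_num))
  refine ContinuousOn.congr ?_ fun r hr => bohrP_eq hr.1 (hr.2.trans (by norm_num))
  have hr1 : ∀ r ∈ Icc (0 : ℝ) (1 / 2), 1 - r ≠ 0 := fun r hr => by linarith [hr.2]
  refine ((ContinuousOn.add ?_ ?_).sub ?_).sub continuousOn_const
  · exact ContinuousOn.div (by fun_prop) (by fun_prop) fun r hr => by simpa using hr1 r hr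
  · fun_prop
  · exact (ContinuousOn.log (by fun_prop) hr1).div_const 3

theorem P3_signs_and_root :
    (2*(2 - (0:ℝ)^2)*(0:ℝ)/(3*(1-(0:ℝ))^2)
        - (1/3) * (∫ t in (0:ℝ)..(0:ℝ), Real.log (1-t) / t)
        - (1/3) * Real.log (1-(0:ℝ))
        + (∑' n : ℕ, (0:ℝ)^(n+2)/(3*((n:ℝ)+2)^2)) - (1/3 + Real.pi^2/36)
      = -(1/3 + Real.pi^2/36)) ∧
    (-(1/3 + Real.pi^2/36) : ℝ) < 0 ∧
    (2*(2 - ((1:ℝ)/2)^2)*((1:ℝ)/2)/(3*(1-(1:ℝ)/2)^2)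
        - (1/3) * (∫ t in (0:ℝ)..((1:ℝ)/2), Real.log (1-t) / t)
        - (1/3) * Real.log (1-(1:ℝ)/2)
        + (∑' n : ℕ, ((1:ℝ)/2)^(n+2)/(3*((n:ℝ)+2)^2)) - (1/3 + Real.pi^2/36)
      = (66 + Real.pi^2 - 12*(Real.log 2)^2 + Real.log 4096)/36) ∧
    (0 : ℝ) < (66 + Real.pi^2 - 12*(Real.log 2)^2 + Real.log 4096)/36 ∧
    (∃ r : ℝ, r ∈ Set.Ioo (0 : ℝ) (1/2) ∧
      2*(2 - r^2)*r/(3*(1-r)^2)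
        - (1/3) * (∫ t in (0:ℝ)..r, Real.log (1-t) / t)
        - (1/3) * Real.log (1-r)
        + (∑' n : ℕ, r^(n+2)/(3*((n:ℝ)+2)^2)) - (1/3 + Real.pi^2/36) = 0) := by
  have hneg : -(1 / 3 + π ^ 2 / 36) < 0 := neg_neg_of_pos (by positivity)
  have hpos : 0 < (66 + π ^ 2 - 12 * log 2 ^ 2 + log 4096) / 36 := by
    have hlog2 : log 2 < 1 := by linarith [log_two_lt_d9]
    have : 0 < log 4096 := log_pos (by norm_num)
    nlinarith [log_nonneg one_le_two]
  have hsign : (0 : ℝ) ∈ Ioo (bohrP 0) (bohrP (1 / 2)) := by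
    rw [bohrP_zero, bohrP_half]; exact ⟨hneg, hpos⟩
  obtain ⟨r, hr, hroot⟩ := intermediate_value_Ioo (by norm_num) continuousOn_bohrP hsign
  exact ⟨bohrP_zero, hneg, bohrP_half, hpos, r, hr, hroot⟩
end
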